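/- arXiv:2405.04330 — 3 statements merged into one kernel-verified Lean document; each statement's English description precedes it below -/
import Mathlib

section
/- Let A ∈ ℝ^{m×n} and let J be a set of k column indices such that the m×k submatrix A(:,J) has rank k and is a local maximum volume m×k submatrix of A (i.e., vol(A(:,J)) ≥ vol(A(:,Ĵ)) for every index set Ĵ of size k differing from J in at most one element). Then A(:,J)ᵀ·A(:,J) is a local maximum volume k×k submatrix of AᵀA; more precisely, for all index sets Ĵ and J̃ of size k each differing from J in at most one element, vol(A(:,Ĵ)ᵀ·A(:,J̃)) ≤ vol(A(:,J)ᵀ·A(:,J)). -/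
open Matrix

/-- The spectral norm (`‖·‖₂`, largest singular value) of a real matrix. -/
noncomputable def specNorm {m n : Type*} [Fintype m] [Fintype n] [DecidableEq n]
    (A : Matrix m n ℝ) : ℝ :=
  ‖LinearMap.toContinuousLinearMap (Matrix.toEuclideanLin A)‖

/-- `sval A j` is the `j`-th largest singular value of `A` (1-indexed), characterized as the
distance, in the spectral norm, from `A` to the set of matrices of rank `< j`. -/
noncomputable def sval {m n : Type*} [Fintype m] [Fintype n] [DecidableEq n]
    (A : Matrix m n ℝ) (j : ℕ) : ℝ :=
  sInf {x : ℝ | ∃ B : Matrix m n ℝ, B.rank < j ∧ x = specNorm (A - B)}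

/-- The volume of a matrix: the product of its singular values. -/
noncomputable def vol {m n : Type*} [Fintype m] [Fintype n] [DecidableEq n]
    (A : Matrix m n ℝ) : ℝ :=
  ∏ j ∈ Finset.Icc 1 (min (Fintype.card m) (Fintype.card n)), sval A j

/-- `DiffOne b r` : `r` is an injective selection of indices whose image (index set)
differs from the index set selected by `b` in at most one element. -/
def DiffOne {ι α : Type*} [Fintype ι] [DecidableEq α] (b r : ι → α) : Prop :=
  Function.Injective r ∧ (Finset.univ.image r \ Finset.univ.image b).card ≤ 1

/-!
By the Eckart–Young theorem, the `j`-th singular value, defined as the spectral-norm distance to the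
matrices of rank `< j`, is the square root of the `j`-th largest eigenvalue of `AᵀA`. Hence
`vol X = √(det (XᵀX))` when `X` has at least as many rows as columns, and `vol M = |det M|` for
square `M`. The determinantal Cauchy–Schwarz inequality `det (XᵀY)² ≤ det (XᵀX) · det (YᵀY)` then
gives `vol (A(:,Ĵ)ᵀ A(:,J̃)) ≤ vol A(:,Ĵ) · vol A(:,J̃) ≤ vol A(:,J) ^ 2 = vol (A(:,J)ᵀ A(:,J))`,
the middle step being local maximality.
-/

open Module
open scoped InnerProductSpace

namespace LinearMap

variable {𝕜 E F : Type*} [RCLike 𝕜] [NormedAddCommGroup E] [InnerProductSpace 𝕜 E]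
  [FiniteDimensional 𝕜 E] [NormedAddCommGroup F] [InnerProductSpace 𝕜 F] [FiniteDimensional 𝕜 F]
  (T : E →ₗ[𝕜] F)

noncomputable def rightSingularVectors : OrthonormalBasis (Fin (finrank 𝕜 E)) 𝕜 E :=
  T.isSymmetric_adjoint_comp_self.eigenvectorBasis rfl

theorem adjoint_comp_self_rightSingularVectors (k : Fin (finrank 𝕜 E)) :
    (adjoint T ∘ₗ T) (T.rightSingularVectors k) =
      ((T.singularValues k ^ 2 : ℝ) : 𝕜) • T.rightSingularVectors k := by
  rw [T.sq_singularValues_fin rfl]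
  exact T.isSymmetric_adjoint_comp_self.apply_eigenvectorBasis rfl k

theorem sq_norm_apply_eq_sum (x : E) :
    ‖T x‖ ^ 2 = ∑ k : Fin (finrank 𝕜 E), T.singularValues k ^ 2 *
      ‖⟪T.rightSingularVectors k, x⟫_𝕜‖ ^ 2 := by
  set v := T.rightSingularVectors
  have hcoef : ∀ k, ⟪x, v k⟫_𝕜 * ⟪v k, (adjoint T ∘ₗ T) x⟫_𝕜
      = (T.singularValues k ^ 2 * ‖⟪v k, x⟫_𝕜‖ ^ 2 : ℝ) := by
    intro k
    rw [← T.isSymmetric_adjoint_comp_self (v k), T.adjoint_comp_self_rightSingularVectors,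
      inner_smul_left, RCLike.conj_ofReal, mul_left_comm, ← inner_conj_symm x, RCLike.conj_mul]
    push_cast; ring
  rw [← RCLike.ofReal_inj (K := 𝕜), RCLike.ofReal_pow, ← inner_self_eq_norm_sq_to_K,
    ← adjoint_inner_right, ← LinearMap.comp_apply, ← v.sum_inner_mul_inner, RCLike.ofReal_sum]
  exact Finset.sum_congr rfl fun k _ => hcoef k

theorem singularValues_mul_norm_le_norm_apply {i : ℕ} {x : E}
    (hx : ∀ k : Fin (finrank 𝕜 E), i < k → ⟪T.rightSingularVectors k, x⟫_𝕜 = 0) :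
    T.singularValues i * ‖x‖ ≤ ‖T x‖ := by
  refine le_of_pow_le_pow_left₀ two_ne_zero (norm_nonneg _) ?_
  rw [mul_pow, T.sq_norm_apply_eq_sum, ← T.rightSingularVectors.sum_sq_norm_inner_right x,
    Finset.mul_sum]
  refine Finset.sum_le_sum fun k _ => ?_
  rcases le_or_gt (k : ℕ) i with hk | hk
  · gcongr
    · exact T.singularValues_nonneg _
    · exact T.singularValues_antitone hk
  · simp [hx k hk]

theorem norm_apply_le_singularValues_mul_norm {i : ℕ} {x : E}
    (hx : ∀ k : Fin (finrank 𝕜 E), (k : ℕ) < i → ⟪T.rightSingularVectors k, x⟫_𝕜 = 0) :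
    ‖T x‖ ≤ T.singularValues i * ‖x‖ := by
  refine le_of_pow_le_pow_left₀ two_ne_zero (by positivity [T.singularValues_nonneg i]) ?_
  rw [mul_pow, T.sq_norm_apply_eq_sum, ← T.rightSingularVectors.sum_sq_norm_inner_right x,
    Finset.mul_sum]
  refine Finset.sum_le_sum fun k _ => ?_
  rcases lt_or_ge (k : ℕ) i with hk | hk
  · simp [hx k hk]
  · gcongr
    · exact T.singularValues_nonneg _
    · exact T.singularValues_antitone hk

theorem singularValues_le_opNorm_sub {S : E →ₗ[𝕜] F} {i : ℕ}
    (hS : finrank 𝕜 (range S) ≤ i) :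
    T.singularValues i ≤ ‖(T - S).toContinuousLinearMap‖ := by
  rcases le_or_gt (finrank 𝕜 E) i with hi | hi
  · rw [T.singularValues_of_finrank_le hi]
    exact norm_nonneg _
  set v := T.rightSingularVectors
  set W := Submodule.span 𝕜 (Set.range (v ∘ Fin.castLE hi))
  have hW : finrank 𝕜 W = i + 1 := by
    rw [finrank_span_eq_card (v.orthonormal.linearIndependent.comp _ (Fin.castLE_injective hi)),
      Fintype.card_fin]
  let SW : W →ₗ[𝕜] range S := (S.domRestrict W).codRestrict (range S) fun w => mem_range_self S w
  obtain ⟨⟨x, hxW⟩, hx, hx0⟩ := Submodule.exists_mem_ne_zero_of_ne_bot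
    (ker_ne_bot_of_finrank_lt (f := SW) (by omega))
  have hSx : S x = 0 := congrArg Subtype.val (mem_ker.mp hx)
  have hcoef : ∀ k : Fin (finrank 𝕜 E), i < k → ⟪v k, x⟫_𝕜 = 0 := by
    intro k hk
    have hWk : W ≤ ker (innerₛₗ 𝕜 (v k)) := by
      refine Submodule.span_le.mpr ?_
      rintro _ ⟨l, rfl⟩
      refine v.orthonormal.2 fun h => ?_
      have := congrArg Fin.val h
      simp only [Fin.val_castLE] at this
      omega
    exact hWk hxW
  have hx_pos : 0 < ‖x‖ := norm_pos_iff.mpr fun h => hx0 (by simp [h])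
  have hle : ‖T x‖ ≤ ‖(T - S).toContinuousLinearMap‖ * ‖x‖ := by
    simpa [hSx] using ((T - S).toContinuousLinearMap).le_opNorm x
  exact le_of_mul_le_mul_right ((T.singularValues_mul_norm_le_norm_apply hcoef).trans hle) hx_pos

theorem exists_finrank_range_le_opNorm_sub_le (i : ℕ) :
    ∃ S : E →ₗ[𝕜] F, finrank 𝕜 (range S) ≤ i ∧
      ‖(T - S).toContinuousLinearMap‖ ≤ T.singularValues i := by
  rcases lt_or_ge (finrank 𝕜 E) i with hi | hi
  · exact ⟨T, (finrank_range_le T).trans hi.le, by simpa using T.singularValues_nonneg i⟩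
  set v := T.rightSingularVectors
  set W := Submodule.span 𝕜 (Set.range (v ∘ Fin.castLE hi))
  refine ⟨T ∘ₗ (W.starProjection : E →ₗ[𝕜] E), ?_, ?_⟩
  · rw [range_comp]
    refine (Submodule.finrank_map_le _ _).trans ?_
    rw [Submodule.range_starProjection]
    exact (finrank_range_le_card _).trans (Fintype.card_fin i).le
  · refine ContinuousLinearMap.opNorm_le_bound _ (T.singularValues_nonneg i) fun x => ?_
    set y := Wᗮ.starProjection x
    have hy : ∀ k : Fin (finrank 𝕜 E), (k : ℕ) < i → ⟪v k, y⟫_𝕜 = 0 := fun k hk =>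
      Submodule.inner_right_of_mem_orthogonal
        (Submodule.subset_span (Set.mem_range.mpr ⟨⟨k, hk⟩, rfl⟩)) (Wᗮ.starProjection_apply_mem x)
    have hTS : (T - T ∘ₗ (W.starProjection : E →ₗ[𝕜] E)).toContinuousLinearMap x = T y := by
      simp [y, Submodule.starProjection_orthogonal_val]
    rw [hTS]
    exact (T.norm_apply_le_singularValues_mul_norm hy).trans
      (by gcongr; exacts [T.singularValues_nonneg i, Wᗮ.norm_starProjection_apply_le x])

end LinearMap

namespace Matrix

theorem rank_eq_finrank_range_toEuclideanLin {𝕜 m n : Type*} [RCLike 𝕜] [Fintype m]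
    [Fintype n] [DecidableEq n] (B : Matrix m n 𝕜) :
    B.rank = finrank 𝕜 (LinearMap.range (toEuclideanLin B)) :=
  B.rank_eq_finrank_range_toLin (PiLp.basisFun 2 𝕜 m) (PiLp.basisFun 2 𝕜 n)

theorem det_toEuclideanLin {𝕜 n : Type*} [RCLike 𝕜] [Fintype n] [DecidableEq n]
    (M : Matrix n n 𝕜) : LinearMap.det (toEuclideanLin M) = M.det :=
  LinearMap.det_toLin (PiLp.basisFun 2 𝕜 n) M

variable {ι κ : Type*} [Fintype ι] [Fintype κ]

theorem posSemidef_transpose_mul_self (X : Matrix ι κ ℝ) : (Xᵀ * X).PosSemidef := by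
  simpa using posSemidef_conjTranspose_mul_self X

variable [DecidableEq κ]

theorem PosSemidef.one_le_det_one_add {Q : Matrix κ κ ℝ} (hQ : Q.PosSemidef) :
    1 ≤ (1 + Q).det := by
  have h1 : (1 + Q).IsHermitian := isHermitian_one.add hQ.isHermitian
  have heig : ∀ i, 1 ≤ h1.eigenvalues i := fun i => by
    set v := h1.eigenvectorBasis i
    have hv : star ⇑v ⬝ᵥ ⇑v = 1 := by
      rw [dotProduct_comm, ← EuclideanSpace.inner_eq_star_dotProduct, real_inner_self_eq_norm_sq,
        h1.eigenvectorBasis.orthonormal.1 i, one_pow]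
    have := hQ.dotProduct_mulVec_nonneg v
    rw [h1.eigenvalues_eq, add_mulVec, one_mulVec, dotProduct_add, hv]
    simpa using this
  rw [h1.det_eq_prod_eigenvalues]
  simpa using Finset.prod_le_prod (fun _ _ => zero_le_one) fun i _ => heig i

open scoped MatrixOrder in
theorem PosSemidef.det_le_det_add {M N : Matrix κ κ ℝ} (hM : M.PosSemidef) (hN : N.PosSemidef) :
    M.det ≤ (M + N).det := by
  rcases eq_or_ne M.det 0 with hM0 | hM0
  · exact hM0 ▸ (hM.add hN).det_nonneg
  set S := CFC.sqrt M
  have hS : S.IsHermitian := (CFC.sqrt_nonneg M).posSemidef.isHermitian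
  have hSS : S * S = M := CFC.sqrt_mul_sqrt_self M hM.nonneg
  have hSu : IsUnit S.det :=
    isUnit_iff_ne_zero.mpr fun h => hM0 (by rw [← hSS, det_mul, h, zero_mul])
  have hQ : (S⁻¹ * N * S⁻¹).PosSemidef := by
    have := hN.conjTranspose_mul_mul_same S⁻¹
    rwa [conjTranspose_nonsing_inv, hS.eq] at this
  have hfact : M + N = S * (1 + S⁻¹ * N * S⁻¹) * S := by
    rw [mul_add, add_mul, mul_one, hSS, ← Matrix.mul_assoc, ← Matrix.mul_assoc,
      mul_nonsing_inv _ hSu, Matrix.one_mul, Matrix.mul_assoc, nonsing_inv_mul _ hSu,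
      Matrix.mul_one]
  rw [hfact, det_mul, det_mul, mul_right_comm, ← det_mul, hSS]
  exact le_mul_of_one_le_right hM.det_nonneg hQ.one_le_det_one_add

theorem det_transpose_mul_eq_zero_of_det_transpose_mul_self_eq_zero {X Y : Matrix ι κ ℝ}
    (hX : (Xᵀ * X).det = 0) : (Xᵀ * Y).det = 0 := by
  obtain ⟨v, hv0, hv⟩ := exists_mulVec_eq_zero_iff.mpr hX
  have hXv : X *ᵥ v = 0 := by
    have := ker_mulVecLin_transpose_mul_self X ▸ LinearMap.mem_ker.mpr hv
    exact LinearMap.mem_ker.mp this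
  rw [← det_transpose, transpose_mul, transpose_transpose]
  exact exists_mulVec_eq_zero_iff.mp ⟨v, hv0, by rw [← mulVec_mulVec, hXv, mulVec_zero]⟩

theorem det_transpose_mul_sq_le (X Y : Matrix ι κ ℝ) :
    (Xᵀ * Y).det ^ 2 ≤ (Xᵀ * X).det * (Yᵀ * Y).det := by
  rcases eq_or_ne (Xᵀ * X).det 0 with hX0 | hX0
  · rw [det_transpose_mul_eq_zero_of_det_transpose_mul_self_eq_zero hX0, hX0]
    norm_num
  have hGu : IsUnit (Xᵀ * X).det := isUnit_iff_ne_zero.mpr hX0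
  set C := (Xᵀ * X)⁻¹ * (Xᵀ * Y)
  set Z := Y - X * C
  have hXZ : Xᵀ * Z = 0 := by
    rw [Matrix.mul_sub, ← Matrix.mul_assoc, mul_nonsing_inv_cancel_left _ _ hGu, sub_self]
  have hZX : Zᵀ * X = 0 := by simpa using congrArg transpose hXZ
  have hY : Yᵀ * Y = (X * C)ᵀ * (X * C) + Zᵀ * Z := by
    have hYZ : Y = X * C + Z := (add_sub_cancel _ _).symm
    have h₁ : (X * C)ᵀ * Z = 0 := by rw [transpose_mul, Matrix.mul_assoc, hXZ, Matrix.mul_zero]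
    have h₂ : Zᵀ * (X * C) = 0 := by rw [← Matrix.mul_assoc, hZX, Matrix.zero_mul]
    rw [hYZ, transpose_add, Matrix.add_mul, Matrix.mul_add, Matrix.mul_add, h₁, h₂, add_zero,
      zero_add]
  have hdet : (Xᵀ * Y).det = (Xᵀ * X).det * C.det := by
    rw [← det_mul, mul_nonsing_inv_cancel_left _ _ hGu]
  have hXC : ((X * C)ᵀ * (X * C)).det = C.det * (Xᵀ * X).det * C.det := by
    rw [transpose_mul, Matrix.mul_assoc, ← Matrix.mul_assoc Xᵀ, det_mul, det_mul, det_transpose,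
      mul_assoc]
  have hle := (posSemidef_transpose_mul_self (X * C)).det_le_det_add
    (posSemidef_transpose_mul_self Z)
  rw [← hY, hXC] at hle
  rw [hdet]
  nlinarith [(posSemidef_transpose_mul_self X).det_nonneg]

end Matrix

section Volume

variable {m n : Type*} [Fintype m] [Fintype n] [DecidableEq n]

theorem sval_add_one (A : Matrix m n ℝ) (i : ℕ) :
    sval A (i + 1) = (toEuclideanLin A).singularValues i := by
  have hlower : ∀ B : Matrix m n ℝ, B.rank < i + 1 →
      (toEuclideanLin A).singularValues i ≤ specNorm (A - B) := fun B hB => by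
    rw [specNorm, map_sub]
    exact LinearMap.singularValues_le_opNorm_sub _
      (by rw [← B.rank_eq_finrank_range_toEuclideanLin]; omega)
  refine IsLeast.csInf_eq ⟨?_, fun _ ⟨B, hB, hx⟩ => hx ▸ hlower B hB⟩
  obtain ⟨S, hS, hle⟩ := (toEuclideanLin A).exists_finrank_range_le_opNorm_sub_le i
  set B := toEuclideanLin.symm S
  have hB : B.rank < i + 1 := by
    rw [B.rank_eq_finrank_range_toEuclideanLin, LinearEquiv.apply_symm_apply]; omega
  refine ⟨B, hB, le_antisymm (hlower B hB) ?_⟩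
  rwa [specNorm, map_sub, LinearEquiv.apply_symm_apply]

theorem vol_eq_normDet (A : Matrix m n ℝ) (h : Fintype.card n ≤ Fintype.card m) :
    vol A = (toEuclideanLin A).normDet := by
  rw [vol, min_eq_right h, LinearMap.normDet_eq_prod_singularValues, finrank_euclideanSpace,
    ← Finset.Ico_add_one_right_eq_Icc, Finset.range_eq_Ico, ← Finset.prod_Ico_add' _ 0 _ 1]
  simp_rw [sval_add_one]

theorem vol_sq_eq_det (A : Matrix m n ℝ) (h : Fintype.card n ≤ Fintype.card m) :
    vol A ^ 2 = (Aᵀ * A).det := by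
  classical
  have := (toEuclideanLin A).normDet_sq
  rw [← toEuclideanLin_conjTranspose_eq_adjoint, ← toLpLin_mul_same, det_toEuclideanLin,
    conjTranspose_eq_transpose_of_trivial] at this
  rw [vol_eq_normDet A h]
  exact this

theorem vol_eq_abs_det (M : Matrix n n ℝ) : vol M = |M.det| := by
  rw [vol_eq_normDet M le_rfl, LinearMap.normDet_eq_abs_det, det_toEuclideanLin]

theorem vol_nonneg (A : Matrix m n ℝ) : 0 ≤ vol A :=
  Finset.prod_nonneg fun _ _ => Real.sInf_nonneg fun _ ⟨_, _, hx⟩ => hx ▸ norm_nonneg _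

theorem vol_transpose_mul_le (X Y : Matrix m n ℝ) (h : Fintype.card n ≤ Fintype.card m) :
    vol (Xᵀ * Y) ≤ vol X * vol Y := by
  rw [vol_eq_abs_det]
  refine abs_le_of_sq_le_sq ?_ (mul_nonneg (vol_nonneg X) (vol_nonneg Y))
  rw [mul_pow, vol_sq_eq_det X h, vol_sq_eq_det Y h]
  exact det_transpose_mul_sq_le X Y

theorem vol_transpose_mul_self (X : Matrix m n ℝ) (h : Fintype.card n ≤ Fintype.card m) :
    vol (Xᵀ * X) = vol X ^ 2 := by
  rw [vol_eq_abs_det, abs_of_nonneg (posSemidef_transpose_mul_self X).det_nonneg,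
    vol_sq_eq_det X h]

end Volume

theorem statement_7_general {m n k : ℕ}
    (A : Matrix (Fin m) (Fin n) ℝ) (J : Fin k → Fin n)
    (hrank : (A.submatrix id J).rank = k)
    (hmax : ∀ J' : Fin k → Fin n, DiffOne J J' →
      vol (A.submatrix id J') ≤ vol (A.submatrix id J)) :
    ∀ J₁ J₂ : Fin k → Fin n, DiffOne J J₁ → DiffOne J J₂ →
      vol ((A.submatrix id J₁)ᵀ * (A.submatrix id J₂)) ≤
        vol ((A.submatrix id J)ᵀ * (A.submatrix id J)) := by
  intro J₁ J₂ h₁ h₂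
  have hk : Fintype.card (Fin k) ≤ Fintype.card (Fin m) := by
    simpa [hrank] using rank_le_card_height (A.submatrix id J)
  calc vol ((A.submatrix id J₁)ᵀ * (A.submatrix id J₂))
      ≤ vol (A.submatrix id J₁) * vol (A.submatrix id J₂) := vol_transpose_mul_le _ _ hk
    _ ≤ vol (A.submatrix id J) * vol (A.submatrix id J) :=
      mul_le_mul (hmax J₁ h₁) (hmax J₂ h₂) (vol_nonneg _) (vol_nonneg _)
    _ = vol ((A.submatrix id J)ᵀ * (A.submatrix id J)) := by
      rw [vol_transpose_mul_self _ hk, sq]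

theorem statement_7 {m n k : ℕ}
    (A : Matrix (Fin m) (Fin n) ℝ) (J : Fin k → Fin n)
    (hJ : Function.Injective J)
    (hrank : (A.submatrix id J).rank = k)
    (hpos : 0 < vol (A.submatrix id J))
    (hmax : ∀ J' : Fin k → Fin n, DiffOne J J' →
      vol (A.submatrix id J') ≤ vol (A.submatrix id J)) :
    ∀ J₁ J₂ : Fin k → Fin n, DiffOne J J₁ → DiffOne J J₂ →
      vol ((A.submatrix id J₁)ᵀ * (A.submatrix id J₂)) ≤
        vol ((A.submatrix id J)ᵀ * (A.submatrix id J)) :=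
  statement_7_general A J hrank hmax
end

section
/- Let A ∈ ℝ^{m×n} with k < min(m,n) be partitioned in blocks A = [[A11, A12],[A21, A22]] with A11 ∈ ℝ^{k×k} invertible, and let S(A11) = A22 − A21·A11⁻¹·A12. Suppose A11 = L·D·U where L is unit lower triangular, D is invertible diagonal, U is unit upper triangular, and that: (i) ‖L‖_max ≤ 1 and ‖U‖_max ≤ 1; (ii) ‖D⁻¹L⁻¹A12‖_max ≤ 1; (iii) ‖A21U⁻¹D⁻¹‖_max ≤ 1; (iv) ‖S(A11)‖_max ≤ ρ·min_i |D_{ii}| for some ρ ≥ 1. (These conditions hold when A11 is the k×k pivot block selected by k steps of Gaussian elimination with complete pivoting, with ρ the associated growth factor.) Then for every 1 ≤ j ≤ k: σ_j(A) ≤ 4^{k+1}·(k + ρ)·√((m−k)(n−k))·σ_j(A11); in particular vol(A11) ≥ (4^{k+1}(k+ρ)√((m−k)(n−k)))^{−k}·∏_{j=1}^k σ_j(A). -/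
open Matrix

/-!
Put `W = A21 A11⁻¹`, `V = A11⁻¹ A12` and let `S` be the Schur complement. Then
`A = [1; W] A11 [1, V] + diag(0, S)`, so `σ_j(A) ≤ ‖[1; W]‖ ‖[1, V]‖ σ_j(A11) + ‖S‖`.
Since `W = (A21 U⁻¹ D⁻¹) L⁻¹` and `V = U⁻¹ (D⁻¹ L⁻¹ A12)`, the entries of `W` and `V` are bounded
by the column sums of `|L⁻¹|` and the row sums of `|U⁻¹|`; for a unit triangular matrix with
entries in `[-1, 1]` these are at most `2 ^ (k - 1)`, by forward substitution. Finally
`‖S‖ ≤ √(m' n') ρ d` with `d = min |D i i|`, and `d ≤ ‖L⁻¹‖ ‖U⁻¹‖ σ_j(A11) ≤ 4 ^ k / 3 · σ_j(A11)`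
because `‖A11⁻¹‖⁻¹ ≤ σ_j(A11)` and `‖A11⁻¹‖ ≤ ‖U⁻¹‖ ‖L⁻¹‖ / d`.
-/

open scoped Matrix.Norms.L2Operator
open Finset

theorem sum_sq_le_of_abs_le {m n : Type*} [Fintype m] [Fintype n] {A : Matrix m n ℝ} {c : ℝ}
    (h : ∀ i j, |A i j| ≤ c) :
    ∑ i, ∑ j, A i j ^ 2 ≤ Fintype.card m * Fintype.card n * c ^ 2 :=
  calc ∑ i, ∑ j, A i j ^ 2 ≤ ∑ _i : m, ∑ _j : n, c ^ 2 :=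
        sum_le_sum fun i _ => sum_le_sum fun j _ =>
          sq_abs (A i j) ▸ pow_le_pow_left₀ (abs_nonneg _) (h i j) 2
    _ = _ := by simp [mul_assoc]

section L2OpNorm

variable {m n p : Type*} [Fintype m] [Fintype n] [Fintype p] [DecidableEq n] [DecidableEq p]

theorem Matrix.l2_opNorm_le_sqrt_sum_sq (A : Matrix m n ℝ) :
    ‖A‖ ≤ √(∑ i, ∑ j, A i j ^ 2) := by
  rw [l2_opNorm_def]
  refine ContinuousLinearMap.opNorm_le_bound _ (Real.sqrt_nonneg _) fun x => ?_
  rw [← Real.sqrt_sq (norm_nonneg _), ← Real.sqrt_sq (norm_nonneg x),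
    ← Real.sqrt_mul (by positivity)]
  refine Real.sqrt_le_sqrt ?_
  simp only [EuclideanSpace.norm_sq_eq, Real.norm_eq_abs, sq_abs]
  rw [sum_mul]
  refine sum_le_sum fun i _ => ?_
  simpa [mulVec, dotProduct] using sum_mul_sq_le_sq_mul_sq univ (A i) x.ofLp

theorem Matrix.l2_opNorm_transpose [DecidableEq m] (A : Matrix m n ℝ) : ‖Aᵀ‖ = ‖A‖ := by
  rw [← conjTranspose_eq_transpose_of_trivial, l2_opNorm_conjTranspose]

theorem Matrix.l2_opNorm_fromRows_one_le (W : Matrix m p ℝ) {c : ℝ}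
    (hW : ∀ i j, |W i j| ≤ c) :
    ‖fromRows (1 : Matrix p p ℝ) W‖ ≤
      √(Fintype.card p + Fintype.card m * Fintype.card p * c ^ 2) := by
  refine (l2_opNorm_le_sqrt_sum_sq _).trans (Real.sqrt_le_sqrt ?_)
  have hone : ∑ i : p, ∑ j : p, (1 : Matrix p p ℝ) i j ^ 2 = Fintype.card p := by
    simp [one_apply]
  simpa [Fintype.sum_sum_type, hone] using sum_sq_le_of_abs_le hW

theorem Matrix.l2_opNorm_fromCols_one_le (V : Matrix p n ℝ) {c : ℝ}
    (hV : ∀ i j, |V i j| ≤ c) :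
    ‖fromCols (1 : Matrix p p ℝ) V‖ ≤
      √(Fintype.card p + Fintype.card n * Fintype.card p * c ^ 2) := by
  rw [← l2_opNorm_transpose, transpose_fromCols, transpose_one]
  exact l2_opNorm_fromRows_one_le Vᵀ fun i j => hV j i

theorem Matrix.l2_opNorm_fromBlocks_zero_zero_zero_le {q : Type*} [Fintype q] [DecidableEq q]
    (S : Matrix m n ℝ) {c : ℝ} (hS : ∀ i j, |S i j| ≤ c) :
    ‖fromBlocks (0 : Matrix q p ℝ) 0 0 S‖ ≤ √(Fintype.card m * Fintype.card n * c ^ 2) := by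
  refine (l2_opNorm_le_sqrt_sum_sq _).trans (Real.sqrt_le_sqrt ?_)
  simpa [Fintype.sum_sum_type] using sum_sq_le_of_abs_le hS

theorem Matrix.IsDiag.l2_opNorm_inv_le {D : Matrix n n ℝ} (hD : D.IsDiag) {d : ℝ} (hd : 0 < d)
    (hdD : ∀ i, d ≤ |D i i|) : ‖D⁻¹‖ ≤ d⁻¹ := by
  have hD0 : ∀ i, D i i ≠ 0 := fun i => abs_pos.1 (hd.trans_le (hdD i))
  have hinv : D⁻¹ = diagonal fun i => (D i i)⁻¹ := by
    refine inv_eq_left_inv ?_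
    conv_lhs => rw [← hD.diagonal_diag]
    simp [diagonal_mul_diagonal, hD0]
  rw [hinv, l2_opNorm_diagonal]
  refine (pi_norm_le_iff_of_nonneg (by positivity)).2 fun i => ?_
  rw [norm_inv, Real.norm_eq_abs]
  exact inv_anti₀ hd (hdD i)

end L2OpNorm

section SingularValues

variable {m n : Type*} [Fintype m] [Fintype n] [DecidableEq n]

theorem sval_nonneg (A : Matrix m n ℝ) (j : ℕ) : 0 ≤ sval A j :=
  Real.sInf_nonneg <| by rintro _ ⟨B, -, rfl⟩; exact norm_nonneg _

theorem sval_le_l2_opNorm_sub (A : Matrix m n ℝ) {B : Matrix m n ℝ} {j : ℕ} (hB : B.rank < j) :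
    sval A j ≤ ‖A - B‖ :=
  csInf_le ⟨0, by rintro _ ⟨B, -, rfl⟩; exact norm_nonneg _⟩ ⟨B, hB, rfl⟩

theorem le_add_mul_sval {M : Matrix m n ℝ} {j : ℕ} (hj : 1 ≤ j) {a c t : ℝ} (ht : 0 ≤ t)
    (h : ∀ B : Matrix m n ℝ, B.rank < j → a ≤ c + t * ‖M - B‖) : a ≤ c + t * sval M j := by
  have hne : {x | ∃ B : Matrix m n ℝ, B.rank < j ∧ x = specNorm (M - B)}.Nonempty :=
    ⟨_, 0, by rw [rank_zero]; omega, rfl⟩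
  have hmono : Monotone fun x : ℝ => c + t * x := fun x y hxy => by dsimp only; gcongr
  rw [sval, hmono.map_csInf_of_continuousAt (by fun_prop) hne
    ⟨0, by rintro _ ⟨B, -, rfl⟩; exact norm_nonneg _⟩]
  refine le_csInf (hne.image _) ?_
  rintro _ ⟨_, ⟨B, hB, rfl⟩, rfl⟩
  exact h B hB

theorem sval_add_le (M N : Matrix m n ℝ) {j : ℕ} (hj : 1 ≤ j) :
    sval (M + N) j ≤ sval M j + ‖N‖ := by
  have := le_add_mul_sval (M := M) hj zero_le_one (a := sval (M + N) j) (c := ‖N‖) fun B hB =>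
    calc sval (M + N) j ≤ ‖M - B + N‖ := by
          simpa only [sub_add_eq_add_sub] using sval_le_l2_opNorm_sub (M + N) hB
      _ ≤ ‖N‖ + 1 * ‖M - B‖ := by rw [one_mul, add_comm ‖N‖]; exact norm_add_le _ _
  linarith

theorem sval_mul_mul_le {m' n' : Type*} [Fintype m'] [Fintype n'] [DecidableEq m]
    [DecidableEq n'] (X : Matrix m' m ℝ) (M : Matrix m n ℝ) (Y : Matrix n n' ℝ) {j : ℕ}
    (hj : 1 ≤ j) : sval (X * M * Y) j ≤ ‖X‖ * ‖Y‖ * sval M j := by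
  simpa using le_add_mul_sval (M := M) hj (c := 0) (by positivity) fun B hB =>
    calc sval (X * M * Y) j ≤ ‖X * M * Y - X * B * Y‖ :=
          sval_le_l2_opNorm_sub _ <|
            ((rank_mul_le_left _ _).trans (rank_mul_le_right _ _)).trans_lt hB
      _ = ‖X * (M - B) * Y‖ := by rw [Matrix.mul_sub, Matrix.sub_mul]
      _ ≤ ‖X‖ * ‖M - B‖ * ‖Y‖ :=
          (l2_opNorm_mul _ _).trans (by gcongr; exact l2_opNorm_mul _ _)
      _ = 0 + ‖X‖ * ‖Y‖ * ‖M - B‖ := by ring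

theorem one_le_l2_opNorm_inv_mul_sval (A : Matrix n n ℝ) (hA : IsUnit A.det)
    {j : ℕ} (hj : 1 ≤ j) (hjn : j ≤ Fintype.card n) : 1 ≤ ‖A⁻¹‖ * sval A j := by
  suffices h : ∀ B : Matrix n n ℝ, B.rank < j → 1 ≤ 0 + ‖A⁻¹‖ * ‖A - B‖ by
    simpa using le_add_mul_sval hj (norm_nonneg A⁻¹) h
  intro B hB
  have hBdet : B.det = 0 := by
    by_contra hB0
    have := rank_of_isUnit B ((isUnit_iff_isUnit_det B).mpr (isUnit_iff_ne_zero.mpr hB0))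
    omega
  obtain ⟨v, hv0, hBv⟩ := exists_mulVec_eq_zero_iff.mpr hBdet
  set x : EuclideanSpace ℝ n := WithLp.toLp 2 v
  have hx : 0 < ‖x‖ := by simpa [x] using hv0
  have : 1 * ‖x‖ ≤ ‖A⁻¹‖ * ‖A - B‖ * ‖x‖ := calc
    1 * ‖x‖ = ‖(EuclideanSpace.equiv n ℝ).symm (A⁻¹ *ᵥ ((A - B) *ᵥ v))‖ := by
      rw [sub_mulVec, hBv, sub_zero, mulVec_mulVec, nonsing_inv_mul _ hA, one_mulVec, one_mul]
      rfl
    _ ≤ ‖A⁻¹‖ * ‖(EuclideanSpace.equiv n ℝ).symm ((A - B) *ᵥ v)‖ :=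
      l2_opNorm_mulVec A⁻¹ ((EuclideanSpace.equiv n ℝ).symm ((A - B) *ᵥ v))
    _ ≤ ‖A⁻¹‖ * ‖A - B‖ * ‖x‖ := by
      rw [mul_assoc]; gcongr; exact l2_opNorm_mulVec (A - B) x
  simpa using le_of_mul_le_mul_right this hx

theorem Matrix.IsDiag.le_l2_opNorm_inv_mul_l2_opNorm_inv_mul_sval {L D U : Matrix n n ℝ}
    (hD : D.IsDiag) {d : ℝ} (hd : 0 < d) (hdD : ∀ i, d ≤ |D i i|) (hA : IsUnit (L * D * U).det)
    {j : ℕ} (hj : 1 ≤ j) (hjn : j ≤ Fintype.card n) :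
    d ≤ ‖L⁻¹‖ * ‖U⁻¹‖ * sval (L * D * U) j := by
  have hinv : ‖(L * D * U)⁻¹‖ * d ≤ ‖L⁻¹‖ * ‖U⁻¹‖ := calc
    ‖(L * D * U)⁻¹‖ * d = ‖U⁻¹ * D⁻¹ * L⁻¹‖ * d := by
      rw [Matrix.mul_inv_rev, Matrix.mul_inv_rev, Matrix.mul_assoc]
    _ ≤ ‖U⁻¹‖ * ‖D⁻¹‖ * ‖L⁻¹‖ * d := by
      gcongr
      exact (l2_opNorm_mul _ _).trans (by gcongr; exact l2_opNorm_mul _ _)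
    _ ≤ ‖U⁻¹‖ * d⁻¹ * ‖L⁻¹‖ * d := by gcongr; exact hD.l2_opNorm_inv_le hd hdD
    _ = ‖L⁻¹‖ * ‖U⁻¹‖ := by field_simp
  have h1 := one_le_l2_opNorm_inv_mul_sval _ hA hj hjn
  have h0 := sval_nonneg (L * D * U) j
  nlinarith

end SingularValues

theorem sum_range_le_two_pow_of_le_add_sum {f : ℕ → ℝ} {j : ℕ}
    (hf : ∀ i, f i ≤ (if i = j then 1 else 0) + ∑ l ∈ range i, f l) (n : ℕ) :
    ∑ l ∈ range n, f l ≤ if n ≤ j then 0 else 2 ^ (n - 1 - j) := by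
  induction n with
  | zero => simp
  | succ n ih =>
    rw [sum_range_succ]
    have hfn := hf n
    rcases lt_trichotomy n j with hnj | rfl | hjn
    · rw [if_pos hnj.le] at ih
      rw [if_neg hnj.ne, zero_add] at hfn
      rw [if_pos (by omega)]
      linarith
    · rw [if_pos le_rfl] at ih
      rw [if_pos rfl] at hfn
      rw [if_neg (by omega), show n + 1 - 1 - n = 0 by omega, pow_zero]
      linarith
    · rw [if_neg (by omega)] at ih
      rw [if_neg hjn.ne', zero_add] at hfn
      rw [if_neg (by omega), show n + 1 - 1 - j = n - 1 - j + 1 by omega, pow_succ]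
      linarith

theorem sum_four_pow_sub_le (k : ℕ) : ∑ j : Fin k, (4 : ℝ) ^ (k - 1 - j) ≤ 4 ^ k / 3 := by
  rw [Fin.sum_univ_eq_sum_range (fun j => (4 : ℝ) ^ (k - 1 - j)) k,
    sum_range_reflect (fun j => (4 : ℝ) ^ j) k, geom_sum_eq (by norm_num) k]
  linarith

section UnitLowerTriangular

variable {n : Type*} [Fintype n] [DecidableEq n] [LinearOrder n] {L : Matrix n n ℝ}

theorem Matrix.IsLowerTriangular.det_eq_one (hL : L.IsLowerTriangular) (hdiag : ∀ i, L i i = 1) :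
    L.det = 1 := by
  simp [det_of_isLowerTriangular L hL, hdiag]

theorem Matrix.IsLowerTriangular.abs_inv_apply_le [LocallyFiniteOrderBot n]
    (hL : L.IsLowerTriangular) (hdiag : ∀ i, L i i = 1) (hmax : ∀ i j, |L i j| ≤ 1) (i j : n) :
    |L⁻¹ i j| ≤ (if i = j then 1 else 0) + ∑ l ∈ Iio i, |L⁻¹ l j| := by
  have hrow : ∑ l, L i l * L⁻¹ l j = (1 : Matrix n n ℝ) i j := by
    rw [← mul_apply, mul_nonsing_inv L (by rw [hL.det_eq_one hdiag]; exact isUnit_one)]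
  rw [← add_sum_erase _ _ (mem_univ i), hdiag, one_mul] at hrow
  have hIio : ∑ l ∈ univ.erase i, L i l * L⁻¹ l j = ∑ l ∈ Iio i, L i l * L⁻¹ l j := by
    refine (sum_subset (fun l hl => mem_erase.2 ⟨(mem_Iio.1 hl).ne, mem_univ l⟩) ?_).symm
    intro l hl hl'
    have hil : i < l := lt_of_le_of_ne (not_lt.1 (mem_Iio.not.1 hl')) (mem_erase.1 hl).1.symm
    rw [hL (OrderDual.toDual_lt_toDual.2 hil), zero_mul]
  calc |L⁻¹ i j| = |(1 : Matrix n n ℝ) i j - ∑ l ∈ Iio i, L i l * L⁻¹ l j| := by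
        rw [← hrow, hIio, add_sub_cancel_right]
    _ ≤ |(1 : Matrix n n ℝ) i j| + ∑ l ∈ Iio i, |L i l * L⁻¹ l j| :=
        (abs_sub _ _).trans (add_le_add le_rfl (abs_sum_le_sum_abs _ _))
    _ ≤ _ := by
        refine add_le_add (by by_cases h : i = j <;> simp [one_apply, h]) (sum_le_sum fun l _ => ?_)
        rw [abs_mul]
        exact mul_le_of_le_one_left (abs_nonneg _) (hmax i l)

end UnitLowerTriangular

section UnitTriangularFin

variable {k : ℕ} {L : Matrix (Fin k) (Fin k) ℝ}

theorem Matrix.IsLowerTriangular.sum_abs_inv_apply_le (hL : L.IsLowerTriangular)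
    (hdiag : ∀ i, L i i = 1) (hmax : ∀ i j, |L i j| ≤ 1) (j : Fin k) :
    ∑ i, |L⁻¹ i j| ≤ 2 ^ (k - 1 - j) := by
  set f : ℕ → ℝ := fun i => if h : i < k then |L⁻¹ ⟨i, h⟩ j| else 0
  have hf0 : ∀ i, 0 ≤ f i := fun i => by dsimp only [f]; split <;> positivity
  have hsum : ∀ i : Fin k, ∑ l ∈ Iio i, |L⁻¹ l j| = ∑ l ∈ range i, f l := by
    intro i
    rw [← Nat.Iio_eq_range, ← Fin.map_valEmbedding_Iio, sum_map]
    simp [f]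
  have hf : ∀ i, f i ≤ (if i = j then 1 else 0) + ∑ l ∈ range i, f l := by
    intro i
    by_cases hik : i < k
    · simpa [f, hik, Fin.ext_iff, hsum] using hL.abs_inv_apply_le hdiag hmax ⟨i, hik⟩ j
    · simp only [f, dif_neg hik]
      exact add_nonneg (by split <;> norm_num) (sum_nonneg fun l _ => hf0 l)
  have hcol : ∑ i, |L⁻¹ i j| = ∑ i ∈ range k, f i := by
    rw [← Fin.sum_univ_eq_sum_range]
    simp [f]
  simpa [hcol, if_neg (show ¬k ≤ j by omega)] using sum_range_le_two_pow_of_le_add_sum hf k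

theorem Matrix.IsLowerTriangular.l2_opNorm_inv_le (hL : L.IsLowerTriangular)
    (hdiag : ∀ i, L i i = 1) (hmax : ∀ i j, |L i j| ≤ 1) : ‖L⁻¹‖ ≤ √(4 ^ k / 3) := by
  refine (l2_opNorm_le_sqrt_sum_sq _).trans (Real.sqrt_le_sqrt ?_)
  calc ∑ i, ∑ j, L⁻¹ i j ^ 2 = ∑ j, ∑ i, |L⁻¹ i j| ^ 2 := by simp_rw [sq_abs]; exact sum_comm
    _ ≤ ∑ j, (∑ i, |L⁻¹ i j|) ^ 2 :=
        sum_le_sum fun j _ => sum_sq_le_sq_sum_of_nonneg fun i _ => abs_nonneg _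
    _ ≤ ∑ j : Fin k, ((2 : ℝ) ^ (k - 1 - j)) ^ 2 :=
        sum_le_sum fun j _ => pow_le_pow_left₀ (sum_nonneg fun i _ => abs_nonneg _)
          (hL.sum_abs_inv_apply_le hdiag hmax j) 2
    _ = ∑ j : Fin k, (4 : ℝ) ^ (k - 1 - j) := by
        simp_rw [← pow_mul, mul_comm _ 2, pow_mul]; norm_num
    _ ≤ 4 ^ k / 3 := sum_four_pow_sub_le k

theorem Matrix.IsLowerTriangular.abs_mul_inv_apply_le {m : Type*} [Fintype m]
    (hL : L.IsLowerTriangular) (hdiag : ∀ i, L i i = 1) (hmax : ∀ i j, |L i j| ≤ 1)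
    {X : Matrix m (Fin k) ℝ} (hX : ∀ i l, |X i l| ≤ 1) (i : m) (j : Fin k) :
    |(X * L⁻¹) i j| ≤ 2 ^ (k - 1) :=
  calc |(X * L⁻¹) i j| ≤ ∑ l, |X i l * L⁻¹ l j| := by rw [mul_apply]; exact abs_sum_le_sum_abs _ _
    _ ≤ ∑ l, |L⁻¹ l j| := sum_le_sum fun l _ => by
        rw [abs_mul]; exact mul_le_of_le_one_left (abs_nonneg _) (hX i l)
    _ ≤ 2 ^ (k - 1 - j) := hL.sum_abs_inv_apply_le hdiag hmax j
    _ ≤ 2 ^ (k - 1) := pow_le_pow_right₀ one_le_two (by omega)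

variable {U : Matrix (Fin k) (Fin k) ℝ}

theorem Matrix.IsUpperTriangular.l2_opNorm_inv_le (hU : U.IsUpperTriangular)
    (hdiag : ∀ i, U i i = 1) (hmax : ∀ i j, |U i j| ≤ 1) : ‖U⁻¹‖ ≤ √(4 ^ k / 3) := by
  rw [← l2_opNorm_transpose, transpose_nonsing_inv]
  exact IsLowerTriangular.l2_opNorm_inv_le hU.transpose hdiag fun i j => hmax j i

theorem Matrix.IsUpperTriangular.abs_inv_mul_apply_le {n : Type*} [Fintype n]
    (hU : U.IsUpperTriangular) (hdiag : ∀ i, U i i = 1) (hmax : ∀ i j, |U i j| ≤ 1)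
    {Y : Matrix (Fin k) n ℝ} (hY : ∀ l j, |Y l j| ≤ 1) (i : Fin k) (j : n) :
    |(U⁻¹ * Y) i j| ≤ 2 ^ (k - 1) := by
  rw [← transpose_apply (U⁻¹ * Y), transpose_mul, transpose_nonsing_inv]
  exact IsLowerTriangular.abs_mul_inv_apply_le hU.transpose hdiag (fun i j => hmax j i)
    (fun i l => hY l i) j i

end UnitTriangularFin

theorem fromBlocks_eq_mul_mul_add_schur {p m n : Type*} [Fintype p] [DecidableEq p]
    (A11 : Matrix p p ℝ) (A12 : Matrix p n ℝ) (A21 : Matrix m p ℝ) (A22 : Matrix m n ℝ)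
    (hA : IsUnit A11.det) :
    fromBlocks A11 A12 A21 A22 =
      fromRows (1 : Matrix p p ℝ) (A21 * A11⁻¹) * A11 * fromCols 1 (A11⁻¹ * A12) +
        fromBlocks 0 0 0 (A22 - A21 * A11⁻¹ * A12) := by
  rw [fromRows_mul, Matrix.one_mul, nonsing_inv_mul_cancel_right A11 A21 hA,
    fromRows_mul_fromCols, Matrix.mul_one, Matrix.mul_one,
    mul_nonsing_inv_cancel_left A11 A12 hA, fromBlocks_add, add_zero, add_zero, add_zero,
    ← Matrix.mul_assoc, add_sub_cancel]

theorem sval_fromBlocks_le {p m n : Type*} [Fintype p] [Fintype m] [Fintype n] [DecidableEq p]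
    [DecidableEq n] (A11 : Matrix p p ℝ) (A12 : Matrix p n ℝ) (A21 : Matrix m p ℝ)
    (A22 : Matrix m n ℝ) (hA : IsUnit A11.det) {j : ℕ} (hj : 1 ≤ j) :
    sval (fromBlocks A11 A12 A21 A22) j ≤
      ‖fromRows (1 : Matrix p p ℝ) (A21 * A11⁻¹)‖ * ‖fromCols (1 : Matrix p p ℝ) (A11⁻¹ * A12)‖ *
          sval A11 j +
        ‖fromBlocks (0 : Matrix p p ℝ) 0 0 (A22 - A21 * A11⁻¹ * A12)‖ := by
  rw [fromBlocks_eq_mul_mul_add_schur A11 A12 A21 A22 hA]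
  exact (sval_add_le _ _ hj).trans (add_le_add_left (sval_mul_mul_le _ _ _ hj) _)

theorem sval_fromBlocks_le_of_abs_le {p m n : Type*} [Fintype p] [Fintype m] [Fintype n]
    [DecidableEq p] [DecidableEq n] {A11 : Matrix p p ℝ} {A12 : Matrix p n ℝ}
    {A21 : Matrix m p ℝ} {A22 : Matrix m n ℝ} (hA : IsUnit A11.det)
    (hm : 1 ≤ Fintype.card m) (hn : 1 ≤ Fintype.card n) {c ρ d e : ℝ} (hc : 1 ≤ c)
    (hρ : 0 ≤ ρ) (hd : 0 ≤ d) (hW : ∀ i l, |(A21 * A11⁻¹) i l| ≤ c)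
    (hV : ∀ l j, |(A11⁻¹ * A12) l j| ≤ c) (hS : ∀ i j, |(A22 - A21 * A11⁻¹ * A12) i j| ≤ ρ * d)
    {j : ℕ} (hj : 1 ≤ j) (hde : d ≤ e * sval A11 j) :
    sval (fromBlocks A11 A12 A21 A22) j ≤
      (2 * Fintype.card p * c ^ 2 + ρ * e) * √(Fintype.card m * Fintype.card n) * sval A11 j := by
  set k : ℝ := (Fintype.card p : ℝ)
  set s := √(Fintype.card m * Fintype.card n)
  have hk_le : ∀ r : ℕ, 1 ≤ r → k ≤ r * k * c ^ 2 := fun r hr => by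
    have : (1 : ℝ) ≤ r * c ^ 2 := one_le_mul_of_one_le_of_one_le (Nat.one_le_cast.2 hr)
      (one_le_pow₀ hc)
    nlinarith [(Fintype.card p).cast_nonneg (α := ℝ)]
  have hPQ : ‖fromRows (1 : Matrix p p ℝ) (A21 * A11⁻¹)‖ *
      ‖fromCols (1 : Matrix p p ℝ) (A11⁻¹ * A12)‖ ≤ 2 * k * c ^ 2 * s := calc
    _ ≤ √(k + Fintype.card m * k * c ^ 2) * √(k + Fintype.card n * k * c ^ 2) :=
        mul_le_mul (l2_opNorm_fromRows_one_le _ hW) (l2_opNorm_fromCols_one_le _ hV)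
          (norm_nonneg _) (Real.sqrt_nonneg _)
    _ ≤ √((2 * k * c ^ 2) ^ 2 * (Fintype.card m * Fintype.card n)) := by
        rw [← Real.sqrt_mul (by positivity)]
        refine Real.sqrt_le_sqrt ?_
        calc _ ≤ (2 * Fintype.card m * k * c ^ 2) * (2 * Fintype.card n * k * c ^ 2) :=
              mul_le_mul (by linarith [hk_le _ hm]) (by linarith [hk_le _ hn]) (by positivity)
                (by positivity)
          _ = _ := by ring
    _ = 2 * k * c ^ 2 * s := by rw [Real.sqrt_mul (by positivity), Real.sqrt_sq (by positivity)]
  have hR : ‖fromBlocks (0 : Matrix p p ℝ) 0 0 (A22 - A21 * A11⁻¹ * A12)‖ ≤ s * (ρ * d) := by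
    have := l2_opNorm_fromBlocks_zero_zero_zero_le (q := p) (p := p) _ hS
    rwa [Real.sqrt_mul (by positivity), Real.sqrt_sq (by positivity)] at this
  calc sval (fromBlocks A11 A12 A21 A22) j
      ≤ 2 * k * c ^ 2 * s * sval A11 j + s * (ρ * (e * sval A11 j)) :=
        (sval_fromBlocks_le A11 A12 A21 A22 hA hj).trans <|
          add_le_add (mul_le_mul_of_nonneg_right hPQ (sval_nonneg _ _)) <|
            hR.trans (mul_le_mul_of_nonneg_left (mul_le_mul_of_nonneg_left hde hρ)
              (Real.sqrt_nonneg _))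
    _ = (2 * k * c ^ 2 + ρ * e) * s * sval A11 j := by ring

theorem isUnit_det_mul_mul {n : Type*} [Fintype n] [DecidableEq n] [LinearOrder n]
    {L D U : Matrix n n ℝ} (hL : L.IsLowerTriangular) (hL_diag : ∀ i, L i i = 1)
    (hU : U.IsUpperTriangular) (hU_diag : ∀ i, U i i = 1) (hD : D.IsDiag)
    (hD_inv : ∀ i, D i i ≠ 0) : IsUnit (L * D * U).det := by
  rw [det_mul, det_mul, hL.det_eq_one hL_diag, det_of_isUpperTriangular hU,
    ← hD.diagonal_diag, det_diagonal]
  simpa [hU_diag] using prod_ne_zero_iff.2 fun i _ => hD_inv i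

theorem two_mul_mul_two_pow_sq_add_mul_le (k : ℕ) {ρ : ℝ} (hρ : 0 ≤ ρ) :
    2 * k * ((2 : ℝ) ^ (k - 1)) ^ 2 + ρ * (4 ^ k / 3) ≤ 4 ^ (k + 1) * (k + ρ) := by
  have h4 : ((2 : ℝ) ^ (k - 1)) ^ 2 ≤ 4 ^ k := by
    rw [← pow_mul, mul_comm, pow_mul]
    exact (pow_le_pow_right₀ (by norm_num) (Nat.sub_le k 1)).trans (by norm_num)
  nlinarith [mul_nonneg k.cast_nonneg (sub_nonneg.2 h4), pow_succ (4 : ℝ) k,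
    mul_nonneg hρ (pow_nonneg zero_le_four k)]

theorem le_four_pow_div_three_mul_sval {k : ℕ} {L D U : Matrix (Fin k) (Fin k) ℝ}
    (hL : L.IsLowerTriangular) (hL_diag : ∀ i, L i i = 1) (hLmax : ∀ i j, |L i j| ≤ 1)
    (hU : U.IsUpperTriangular) (hU_diag : ∀ i, U i i = 1) (hUmax : ∀ i j, |U i j| ≤ 1)
    (hD : D.IsDiag) {d : ℝ} (hd : 0 < d) (hdD : ∀ i, d ≤ |D i i|)
    (hA : IsUnit (L * D * U).det) {j : ℕ} (hj : 1 ≤ j) (hjk : j ≤ k) :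
    d ≤ 4 ^ k / 3 * sval (L * D * U) j := calc
  d ≤ ‖L⁻¹‖ * ‖U⁻¹‖ * sval (L * D * U) j :=
      hD.le_l2_opNorm_inv_mul_l2_opNorm_inv_mul_sval hd hdD hA hj (by simpa using hjk)
  _ ≤ √(4 ^ k / 3) * √(4 ^ k / 3) * sval (L * D * U) j := by
      gcongr
      exacts [sval_nonneg _ _, hL.l2_opNorm_inv_le hL_diag hLmax,
        hU.l2_opNorm_inv_le hU_diag hUmax]
  _ = 4 ^ k / 3 * sval (L * D * U) j := by rw [Real.mul_self_sqrt (by positivity)]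

theorem inv_pow_mul_prod_sval_le_vol {m n : Type*} [Fintype m] [Fintype n] [DecidableEq n]
    {k : ℕ} {A : Matrix m n ℝ} {B : Matrix (Fin k) (Fin k) ℝ} {C : ℝ} (hC : 0 < C)
    (h : ∀ j, 1 ≤ j → j ≤ k → sval A j ≤ C * sval B j) :
    (C ^ k)⁻¹ * ∏ j ∈ Icc 1 k, sval A j ≤ vol B := by
  rw [inv_mul_le_iff₀ (by positivity), vol, Fintype.card_fin, min_self]
  calc ∏ j ∈ Icc 1 k, sval A j ≤ ∏ j ∈ Icc 1 k, C * sval B j :=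
        prod_le_prod (fun j _ => sval_nonneg A j)
          fun j hj => h j (mem_Icc.1 hj).1 (mem_Icc.1 hj).2
    _ = C ^ k * ∏ j ∈ Icc 1 k, sval B j := by
        rw [prod_mul_distrib, prod_const, Nat.card_Icc, Nat.add_sub_cancel]

theorem statement_8 {k m' n' : ℕ} (hm : 1 ≤ m') (hn : 1 ≤ n')
    (A11 : Matrix (Fin k) (Fin k) ℝ) (A12 : Matrix (Fin k) (Fin n') ℝ)
    (A21 : Matrix (Fin m') (Fin k) ℝ) (A22 : Matrix (Fin m') (Fin n') ℝ)
    (L D U : Matrix (Fin k) (Fin k) ℝ) (ρ : ℝ) (hρ : 1 ≤ ρ)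
    (hLDU : A11 = L * D * U)
    (hL_lower : ∀ i j : Fin k, i < j → L i j = 0)
    (hL_diag : ∀ i, L i i = 1)
    (hU_upper : ∀ i j : Fin k, j < i → U i j = 0)
    (hU_diag : ∀ i, U i i = 1)
    (hD_diag : ∀ i j : Fin k, i ≠ j → D i j = 0)
    (hD_inv : ∀ i, D i i ≠ 0)
    (hLmax : ∀ i j, |L i j| ≤ 1)
    (hUmax : ∀ i j, |U i j| ≤ 1)
    (h12 : ∀ i j, |(D⁻¹ * L⁻¹ * A12) i j| ≤ 1)
    (h21 : ∀ i j, |(A21 * U⁻¹ * D⁻¹) i j| ≤ 1)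
    (hS : ∀ (i₀ : Fin k) (i : Fin m') (j : Fin n'),
      |(A22 - A21 * A11⁻¹ * A12) i j| ≤ ρ * |D i₀ i₀|) :
    (∀ j : ℕ, 1 ≤ j → j ≤ k →
      sval (Matrix.fromBlocks A11 A12 A21 A22) j ≤
        4 ^ (k + 1) * (k + ρ) * Real.sqrt (m' * n') * sval A11 j) ∧
    ((4 ^ (k + 1) * ((k : ℝ) + ρ) * Real.sqrt (m' * n')) ^ k)⁻¹ *
        (∏ j ∈ Finset.Icc 1 k, sval (Matrix.fromBlocks A11 A12 A21 A22) j) ≤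
      vol A11 := by
  have hL : L.IsLowerTriangular := fun i j h => hL_lower i j h
  have hU : U.IsUpperTriangular := fun i j h => hU_upper i j h
  have hD : D.IsDiag := fun i j h => hD_diag i j h
  have hA11 : IsUnit A11.det := hLDU ▸ isUnit_det_mul_mul hL hL_diag hU hU_diag hD hD_inv
  have hW : ∀ i l, |(A21 * A11⁻¹) i l| ≤ 2 ^ (k - 1) := by
    rw [hLDU, Matrix.mul_inv_rev, Matrix.mul_inv_rev, ← Matrix.mul_assoc, ← Matrix.mul_assoc]
    exact hL.abs_mul_inv_apply_le hL_diag hLmax h21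
  have hV : ∀ l j, |(A11⁻¹ * A12) l j| ≤ 2 ^ (k - 1) := by
    rw [hLDU, Matrix.mul_inv_rev, Matrix.mul_inv_rev, Matrix.mul_assoc]
    exact hU.abs_inv_mul_apply_le hU_diag hUmax h12
  have hsval : ∀ j : ℕ, 1 ≤ j → j ≤ k → sval (fromBlocks A11 A12 A21 A22) j ≤
      4 ^ (k + 1) * (k + ρ) * √(m' * n') * sval A11 j := by
    intro j hj hjk
    obtain ⟨i₀, -, hi₀⟩ := exists_min_image univ (fun i => |D i i|) ⟨⟨0, by omega⟩, mem_univ _⟩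
    have hd := le_four_pow_div_three_mul_sval hL hL_diag hLmax hU hU_diag hUmax hD
      (abs_pos.2 (hD_inv i₀)) (fun i => hi₀ i (mem_univ i)) (hLDU ▸ hA11) hj hjk
    calc _ ≤ _ := sval_fromBlocks_le_of_abs_le hA11 (by simpa using hm) (by simpa using hn)
          (one_le_pow₀ one_le_two) (zero_le_one.trans hρ) (abs_nonneg _) hW hV (hS i₀) hj
          (hLDU ▸ hd)
      _ ≤ _ := by
        simp only [Fintype.card_fin]
        gcongr
        exacts [sval_nonneg _ _, two_mul_mul_two_pow_sq_add_mul_le k (zero_le_one.trans hρ)]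
  have hC : (0 : ℝ) < 4 ^ (k + 1) * (k + ρ) * √(m' * n') := by
    have : (0 : ℝ) < m' * n' := by positivity
    positivity
  exact ⟨hsval, inv_pow_mul_prod_sval_le_vol hC hsval⟩
end

section
/- For integers m, n ≥ k+1 with k ≥ 2, let A ∈ ℝ^{m×n} be the matrix with entries A_{ii} = k+1 for 1 ≤ i ≤ k, A_{ij} = k+1 whenever both i > k and j > k, and A_{ij} = −1 otherwise, partitioned as A = [[A11, A12],[A21, A22]] with A11 = A(1:k,1:k). Then: (a) the Schur complement S(A11) = A22 − A21·A11⁻¹·A12 equals ((k+2)/2)·J, where J ∈ ℝ^{(m−k)×(n−k)} is the all-ones matrix, so σ_1(S(A11)) = ((k+2)/2)·√((m−k)(n−k)); (b) σ_{k+1}(A) ≤ 2; and consequently (c) σ_1(A − A_k) ≥ ((k+2)/4)·√((m−k)(n−k))·σ_{k+1}(A), where A_k = [[A11, A12],[A21, A21·A11⁻¹·A12]]. -/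
open Matrix

noncomputable def egA11 (k : ℕ) : Matrix (Fin k) (Fin k) ℝ :=
  Matrix.of fun i j => if i = j then (k : ℝ) + 1 else -1

noncomputable def egA12 (k n' : ℕ) : Matrix (Fin k) (Fin n') ℝ :=
  Matrix.of fun _ _ => -1

noncomputable def egA21 (k m' : ℕ) : Matrix (Fin m') (Fin k) ℝ :=
  Matrix.of fun _ _ => -1

noncomputable def egA22 (k m' n' : ℕ) : Matrix (Fin m') (Fin n') ℝ :=
  Matrix.of fun _ _ => (k : ℝ) + 1

noncomputable def egA (k m' n' : ℕ) : Matrix (Fin k ⊕ Fin m') (Fin k ⊕ Fin n') ℝ :=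
  Matrix.fromBlocks (egA11 k) (egA12 k n') (egA21 k m') (egA22 k m' n')

/-!
Writing `J` for all-ones matrices, `A11 = (k + 2) I - J` and `J * J = k J` give
`A11⁻¹ = (k + 2)⁻¹ (I + J / 2)`, so the Schur complement is the constant matrix `(k + 2) / 2`;
it is also the only nonzero block of `A - A_k`, and a constant matrix is rank one, with spectral
norm `c √(m' n')`. For `σ_{k+1}(A) ≤ 2`, a rank-one correction of the top-left block of norm
`(k + 2) / (k + 1)` brings `A` down to rank `k`.
-/

lemma Matrix.eq_zero_of_rank_eq_zero {m n K : Type*} [Fintype n] [DecidableEq n] [Field K]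
    {B : Matrix m n K} (hB : B.rank = 0) : B = 0 := by
  rw [Matrix.rank, Submodule.finrank_eq_zero, LinearMap.range_eq_bot] at hB
  exact Matrix.toLin'.map_eq_zero_iff.mp hB

section SingularValues

variable {m n : Type*} [Fintype m] [Fintype n] [DecidableEq n]

lemma specNorm_nonneg (A : Matrix m n ℝ) : 0 ≤ specNorm A := norm_nonneg _

lemma sval_le_specNorm_sub (A B : Matrix m n ℝ) {j : ℕ} (hB : B.rank < j) :
    sval A j ≤ specNorm (A - B) :=
  csInf_le ⟨0, by rintro x ⟨B, -, rfl⟩; exact specNorm_nonneg _⟩ ⟨B, hB, rfl⟩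

lemma sval_one (A : Matrix m n ℝ) : sval A 1 = specNorm A := by
  have : {x : ℝ | ∃ B : Matrix m n ℝ, B.rank < 1 ∧ x = specNorm (A - B)} = {specNorm A} := by
    ext x
    constructor
    · rintro ⟨B, hB, rfl⟩
      rw [Matrix.eq_zero_of_rank_eq_zero (Nat.lt_one_iff.mp hB), sub_zero]
      rfl
    · rintro rfl
      exact ⟨0, by simp [Matrix.rank_zero], by simp⟩
  rw [sval, this, csInf_singleton]

lemma specNorm_vecMulVec (u : m → ℝ) (w : n → ℝ) :
    specNorm (vecMulVec u w) = √(∑ i, u i ^ 2) * √(∑ j, w j ^ 2) := by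
  have h : toEuclideanLin (vecMulVec u w) =
      InnerProductSpace.rankOne ℝ (WithLp.toLp 2 u) (WithLp.toLp 2 w) := by
    rw [← LinearEquiv.eq_symm_apply, InnerProductSpace.symm_toEuclideanLin_rankOne, star_trivial]
  rw [specNorm, h]
  change ‖InnerProductSpace.rankOne ℝ (WithLp.toLp 2 u) (WithLp.toLp 2 w)‖ = _
  simp [EuclideanSpace.norm_eq]

end SingularValues

section ConstantMatrices

variable {l m n R : Type*} [Fintype m]

lemma Matrix.of_const_mul_of_const [NonUnitalNonAssocSemiring R] (a b : R) :
    (of fun _ _ => a : Matrix l m R) * (of fun _ _ => b : Matrix m n R) =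
      of fun _ _ => Fintype.card m • (a * b) := by
  ext
  simp [mul_apply]

variable [DecidableEq m]

lemma Matrix.smul_one_add_const_mul [CommSemiring R] (a b c d : R) :
    (a • 1 + of fun _ _ => b : Matrix m m R) * (c • 1 + of fun _ _ => d) =
      (a * c) • 1 + of fun _ _ => a * d + b * c + Fintype.card m • (b * d) := by
  ext i j
  simp only [Matrix.mul_add, Algebra.mul_smul_comm, mul_one, smul_add, smul_of, Matrix.add_mul,
    Algebra.smul_mul_assoc, one_mul, of_const_mul_of_const, nsmul_eq_mul, of_add_of,
    Matrix.add_apply, Matrix.smul_apply, smul_eq_mul, of_apply, Pi.smul_apply, Pi.add_apply]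
  ring

lemma Matrix.inv_smul_one_add_const [Field R] {a b : R} (ha : a ≠ 0)
    (hab : a + Fintype.card m * b ≠ 0) :
    (a • 1 + of fun _ _ => b : Matrix m m R)⁻¹ =
      a⁻¹ • 1 + of fun _ _ => -b / (a * (a + Fintype.card m * b)) := by
  apply inv_eq_right_inv
  rw [smul_one_add_const_mul, mul_inv_cancel₀ ha, one_smul, add_eq_left]
  ext
  simp only [of_apply, zero_apply, nsmul_eq_mul]
  rw [mul_comm] at hab
  field_simp
  ring

end ConstantMatrices

lemma egA11_eq (k : ℕ) : egA11 k = ((k : ℝ) + 2) • 1 + of fun _ _ => -1 := by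
  ext i j
  by_cases h : i = j
  · simp only [egA11, h, of_apply, ↓reduceIte, Matrix.add_apply, Matrix.smul_apply, one_apply,
      smul_eq_mul, mul_one]
    ring
  · simp [egA11, h, one_apply]

lemma egA11_inv (k : ℕ) :
    (egA11 k)⁻¹ = ((k : ℝ) + 2)⁻¹ • 1 + of fun _ _ => 1 / (2 * ((k : ℝ) + 2)) := by
  have h2 : (k : ℝ) + 2 + Fintype.card (Fin k) * -1 = 2 := by simp
  rw [egA11_eq, inv_smul_one_add_const (by positivity) (by rw [h2]; norm_num), h2]
  ring_nf

lemma egA_schur (k m' n' : ℕ) :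
    egA22 k m' n' - egA21 k m' * (egA11 k)⁻¹ * egA12 k n' =
      of fun _ _ => ((k : ℝ) + 2) / 2 := by
  rw [egA11_inv, egA21, egA12, Matrix.mul_add, Matrix.mul_smul, Matrix.mul_one, Matrix.add_mul,
    Matrix.smul_mul, of_const_mul_of_const, of_const_mul_of_const, of_const_mul_of_const]
  ext
  simp only [egA22, Fintype.card_fin, mul_neg, mul_one, neg_neg, nsmul_eq_mul, smul_of, one_div,
    _root_.mul_inv_rev, neg_mul, one_mul, smul_neg, of_add_of, Matrix.sub_apply, of_apply,
    Pi.add_apply, Pi.smul_apply, smul_eq_mul]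
  field_simp
  ring

lemma Matrix.rank_fromBlocks_mul_le {m₁ m₂ n₁ n₂ K : Type*} [Fintype m₁] [DecidableEq m₁]
    [Fintype n₁] [Fintype n₂] [CommRing K] [StrongRankCondition K]
    (X : Matrix m₁ n₁ K) (Y : Matrix m₁ n₂ K) (L : Matrix m₂ m₁ K) :
    (fromBlocks X Y (L * X) (L * Y)).rank ≤ Fintype.card m₁ :=
  calc (fromBlocks X Y (L * X) (L * Y)).rank
      = (fromRows 1 L * fromCols X Y).rank := by
        rw [fromRows_mul_fromCols, Matrix.one_mul, Matrix.one_mul]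
    _ ≤ (fromCols X Y).rank := rank_mul_le_right _ _
    _ ≤ Fintype.card m₁ := rank_le_card_height _

/-- The top-left block of `egA` minus this rank-one correction has column sums `k / (k + 1)`, so
the bottom rows of the corrected matrix are `-(k + 1) / k` times the sum of its top rows. -/
lemma rank_egA_sub_le {k : ℕ} (hk : k ≠ 0) (m' n' : ℕ) :
    (egA k m' n' - fromBlocks (of fun _ _ => ((k : ℝ) + 2) / (k * (k + 1))) 0 0 0).rank ≤ k := by
  have hkR : (k : ℝ) ≠ 0 := by exact_mod_cast hk
  set c : ℝ := ((k : ℝ) + 2) / (k * (k + 1))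
  set L : Matrix (Fin m') (Fin k) ℝ := of fun _ _ => -((k : ℝ) + 1) / k
  have h11 : egA11 k - of (fun _ _ => c) = ((k : ℝ) + 2) • 1 + of fun _ _ => -1 - c := by
    rw [egA11_eq]
    ext
    simp [sub_eq_add_neg, add_assoc]
  have h21 : egA21 k m' = L * (egA11 k - of fun _ _ => c) := by
    rw [h11, Matrix.mul_add, Matrix.mul_smul, Matrix.mul_one, of_const_mul_of_const]
    ext
    simp only [egA21, of_apply, neg_add_rev, smul_of, Fintype.card_fin, nsmul_eq_mul,
      Matrix.add_apply, Pi.smul_apply, smul_eq_mul, L, c]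
    field_simp
    ring
  have h22 : egA22 k m' n' = L * egA12 k n' := by
    ext
    simp only [egA22, of_apply, egA12, of_const_mul_of_const, Fintype.card_fin, mul_neg, mul_one,
      smul_neg, nsmul_eq_mul, L]
    field_simp
  have hblocks : egA k m' n' - fromBlocks (of fun _ _ => c) 0 0 0 =
      fromBlocks (egA11 k - of fun _ _ => c) (egA12 k n') (egA21 k m') (egA22 k m' n') := by
    ext (_ | _) (_ | _) <;> simp [egA]
  rw [hblocks, h21, h22]
  simpa using rank_fromBlocks_mul_le _ _ L

lemma sval_egA_le_two {k : ℕ} (hk : k ≠ 0) (m' n' : ℕ) : sval (egA k m' n') (k + 1) ≤ 2 := by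
  set c : ℝ := ((k : ℝ) + 2) / (k * (k + 1)) with hc
  set C : Matrix (Fin k ⊕ Fin m') (Fin k ⊕ Fin n') ℝ := fromBlocks (of fun _ _ => c) 0 0 0
  have hkR : (1 : ℝ) ≤ k := by exact_mod_cast Nat.one_le_iff_ne_zero.mpr hk
  have hC : C = vecMulVec (Sum.elim (fun _ => 1) 0) (Sum.elim (fun _ => c) 0) := by
    ext (_ | _) (_ | _) <;> simp [C, vecMulVec_apply]
  calc sval (egA k m' n') (k + 1) ≤ specNorm (egA k m' n' - (egA k m' n' - C)) :=
        sval_le_specNorm_sub _ _ (Nat.lt_succ_of_le (rank_egA_sub_le hk m' n'))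
    _ = √k * √(k * c ^ 2) := by
        rw [sub_sub_cancel, hC, specNorm_vecMulVec]
        simp
    _ = ((k : ℝ) + 2) / (k + 1) := by
        rw [Real.sqrt_mul (Nat.cast_nonneg k), ← mul_assoc, Real.mul_self_sqrt (Nat.cast_nonneg k),
          Real.sqrt_sq (by positivity), hc]
        field_simp
    _ ≤ 2 := by rw [div_le_iff₀ (by positivity)]; linarith

section ConstantBlocks

variable {l m n p : Type*} [Fintype l] [Fintype m] [Fintype n] [Fintype p] [DecidableEq n]
  [DecidableEq p] {c : ℝ}

lemma specNorm_const (hc : 0 ≤ c) :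
    specNorm (of fun _ _ => c : Matrix m n ℝ) = c * √(Fintype.card m * Fintype.card n) := by
  have h : (of fun _ _ => c : Matrix m n ℝ) = vecMulVec (fun _ => 1) (fun _ => c) := by
    ext; simp [vecMulVec_apply]
  rw [h, specNorm_vecMulVec]
  simp only [one_pow, Finset.sum_const, Finset.card_univ, nsmul_eq_mul, mul_one, Nat.cast_nonneg,
    Real.sqrt_mul, Real.sqrt_sq hc]
  ring

lemma specNorm_fromBlocks_zero_const (hc : 0 ≤ c) :
    specNorm (fromBlocks 0 0 0 (of fun _ _ => c) : Matrix (l ⊕ m) (p ⊕ n) ℝ) =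
      c * √(Fintype.card m * Fintype.card n) := by
  have h : (fromBlocks 0 0 0 (of fun _ _ => c) : Matrix (l ⊕ m) (p ⊕ n) ℝ) =
      vecMulVec (Sum.elim 0 fun _ => 1) (Sum.elim 0 fun _ => c) := by
    ext (_ | _) (_ | _) <;> simp [vecMulVec_apply]
  rw [h, specNorm_vecMulVec]
  simp only [Fintype.sum_sum_type, Sum.elim_inl, Sum.elim_inr, Pi.zero_apply, ne_eq,
    OfNat.ofNat_ne_zero, not_false_eq_true, zero_pow, Finset.sum_const_zero, one_pow,
    Finset.sum_const, Finset.card_univ, nsmul_eq_mul, mul_one, zero_add, Nat.cast_nonneg,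
    Real.sqrt_mul, Real.sqrt_sq hc]
  ring

end ConstantBlocks

theorem statement_16_general {k m' n' : ℕ} (hk : 2 ≤ k) :
    (egA22 k m' n' - egA21 k m' * (egA11 k)⁻¹ * egA12 k n' =
        Matrix.of fun _ _ => ((k : ℝ) + 2) / 2) ∧
    (sval (egA22 k m' n' - egA21 k m' * (egA11 k)⁻¹ * egA12 k n') 1 =
        ((k : ℝ) + 2) / 2 * Real.sqrt (m' * n')) ∧
    (sval (egA k m' n') (k + 1) ≤ 2) ∧
    (((k : ℝ) + 2) / 4 * Real.sqrt (m' * n') * sval (egA k m' n') (k + 1) ≤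
      sval (egA k m' n'
        - Matrix.fromBlocks (egA11 k) (egA12 k n') (egA21 k m')
            (egA21 k m' * (egA11 k)⁻¹ * egA12 k n')) 1) := by
  have hschur := egA_schur k m' n'
  have hsval := sval_egA_le_two (by omega : k ≠ 0) m' n'
  have hc : (0 : ℝ) ≤ ((k : ℝ) + 2) / 2 := by positivity
  have hAk : egA k m' n' - fromBlocks (egA11 k) (egA12 k n') (egA21 k m')
      (egA21 k m' * (egA11 k)⁻¹ * egA12 k n') =
        fromBlocks 0 0 0 (of fun _ _ => ((k : ℝ) + 2) / 2) := by
    rw [← hschur]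
    ext (_ | _) (_ | _) <;> simp [egA]
  refine ⟨hschur, ?_, hsval, ?_⟩
  · simp [hschur, sval_one, specNorm_const hc]
  · rw [hAk, sval_one, specNorm_fromBlocks_zero_const hc]
    simp only [Fintype.card_fin]
    calc ((k : ℝ) + 2) / 4 * √(m' * n') * sval (egA k m' n') (k + 1)
        ≤ ((k : ℝ) + 2) / 4 * √(m' * n') * 2 := by gcongr
      _ = ((k : ℝ) + 2) / 2 * √(m' * n') := by ring

theorem statement_16 {k m' n' : ℕ} (hk : 2 ≤ k) (hm : 1 ≤ m') (hn : 1 ≤ n') :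
    (egA22 k m' n' - egA21 k m' * (egA11 k)⁻¹ * egA12 k n' =
        Matrix.of fun _ _ => ((k : ℝ) + 2) / 2) ∧
    (sval (egA22 k m' n' - egA21 k m' * (egA11 k)⁻¹ * egA12 k n') 1 =
        ((k : ℝ) + 2) / 2 * Real.sqrt (m' * n')) ∧
    (sval (egA k m' n') (k + 1) ≤ 2) ∧
    (((k : ℝ) + 2) / 4 * Real.sqrt (m' * n') * sval (egA k m' n') (k + 1) ≤
      sval (egA k m' n'
        - Matrix.fromBlocks (egA11 k) (egA12 k n') (egA21 k m')
            (egA21 k m' * (egA11 k)⁻¹ * egA12 k n')) 1) :=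
  statement_16_general hk
end
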